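/- For every λ ∈ (0, 1] and every d ∈ [0, 1/2], it holds that g_λ(d) + g_λ(−d) ≤ (2p)^λ + (2p̄)^λ. -/
import Mathlib

/-- `g_λ(d) = p^λ (1/2 + (p̄-p)d)^{1-λ} + p̄^λ (1/2 - (p̄-p)d)^{1-λ}` with `p̄ = 1 - p`;
powers are real powers. -/
noncomputable def gFun (p lam d : ℝ) : ℝ :=
  p ^ lam * (1 / 2 + ((1 - p) - p) * d) ^ (1 - lam) +
    (1 - p) ^ lam * (1 / 2 - ((1 - p) - p) * d) ^ (1 - lam)

theorem stmt_12 (p : ℝ) (hp0 : 0 < p) (hp : p < 1 / 2)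
    (lam : ℝ) (hlam0 : 0 < lam) (hlam1 : lam ≤ 1)
    (d : ℝ) (hd0 : 0 ≤ d) (hd : d ≤ 1 / 2) :
    gFun p lam d + gFun p lam (-d) ≤ (2 * p) ^ lam + (2 * (1 - p)) ^ lam := by
  set c := (1 - p) - p with hc
  have hc0 : 0 < c := by rw [hc]; linarith
  have hc1 : c < 1 := by rw [hc]; linarith
  have ha0 : (0:ℝ) ≤ 1 / 2 + c * d := by nlinarith
  have hb0 : (0:ℝ) ≤ 1 / 2 - c * d := by nlinarith
  set α := 1 - lam with hα
  have hα0 : 0 ≤ α := by rw [hα]; linarith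
  have hα1 : α ≤ 1 := by rw [hα]; linarith
  have key : (1 / 2 + c * d) ^ α + (1 / 2 - c * d) ^ α ≤ 2 ^ lam := by
    have h := (Real.concaveOn_rpow hα0 hα1).2 (Set.mem_Ici.2 ha0) (Set.mem_Ici.2 hb0)
      (by norm_num : (0:ℝ) ≤ 1/2) (by norm_num : (0:ℝ) ≤ 1/2) (by norm_num)
    simp only [smul_eq_mul] at h
    rw [show (1/2 * (1/2 + c*d) + 1/2 * (1/2 - c*d)) = 1/2 by ring] at h
    have h2 : (1/2:ℝ) ^ α = 2 ^ lam / 2 := by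
      rw [show (1/2:ℝ) = 2⁻¹ by norm_num, Real.inv_rpow (by norm_num), hα,
        Real.rpow_sub (by norm_num), Real.rpow_one]
      field_simp
    rw [h2] at h
    linarith
  have hpl : 0 ≤ p ^ lam := Real.rpow_nonneg hp0.le lam
  have hql : 0 ≤ (1 - p) ^ lam := Real.rpow_nonneg (by linarith) lam
  unfold gFun
  rw [show 1/2 + ((1-p)-p)*(-d) = 1/2 - c*d by rw [hc]; ring,
    show 1/2 - ((1-p)-p)*(-d) = 1/2 + c*d by rw [hc]; ring,
    Real.mul_rpow (by norm_num) hp0.le, Real.mul_rpow (by norm_num) (by linarith)]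
  rw [show (1-p) - p = c from rfl]
  nlinarith [mul_nonneg hpl (sub_nonneg.2 key), mul_nonneg hql (sub_nonneg.2 key)]
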